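/- arXiv:1203.0696 — 2 statements merged into one kernel-verified Lean document; each statement's English description precedes it below -/
import Mathlib

section
/- For every ε ∈ (0, 1/2], there exists x in the state-action polytope X(ε) whose rate pair equals (r₁, r₂) = ( (1−ε)²/4 , (2−ε)/4 ). (This is the rate pair of the stationary deterministic policy that stays at queue 1 only in state (1,1,0), switches from queue 1 in states (1,1,1), (1,0,1), (1,0,0), stays at queue 2 in states (2,1,1), (2,0,1), (2,0,0), and switches from queue 2 in state (2,1,0).) -/
/-!
Under the corner policy the server is at queue 1 at the next step exactly when the current
channel state is (ON, OFF), whatever its current location. Since the channels form a chain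
with uniform stationary law, the stationary law of the controlled chain is explicit:
`π(1, c) = ¼ · P(c | (ON, OFF))` and `π(2, c) = ¼ - π(1, c)`. The occupation measure of the
policy under `π` lies in `X(ε)`, and its rates are read off `π`.
-/

open Finset

/-- State of the symmetric Gilbert–Elliot two-queue model:
`(m, c₁, c₂)` where `m = true` means the server is at queue 1,
and `cᵢ = true` means channel `i` is ON. -/
abbrev GEState : Type := Bool × Bool × Bool

/-- One-step symmetric channel transition with flip probability `ε`:
the channel keeps its value with probability `1 - ε` and flips it with probability `ε`. -/
noncomputable def chFlip (ε : ℝ) (c c' : Bool) : ℝ := if c = c' then 1 - ε else ε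

/-- Transition probability of going to state `s'` from state `s` under action `a`
(`a = true` means "stay", `a = false` means "switch"). -/
noncomputable def GEP (ε : ℝ) (s' s : GEState) (a : Bool) : ℝ :=
  (if s'.1 = (if a then s.1 else !s.1) then (1 : ℝ) else 0) *
    chFlip ε s.2.1 s'.2.1 * chFlip ε s.2.2 s'.2.2

/-- The state-action polytope `X(ε)`: nonnegative, normalized vectors satisfying the
balance equations. -/
def GEX (ε : ℝ) : Set (GEState × Bool → ℝ) :=
  {x | (∀ sa, 0 ≤ x sa) ∧ (∑ sa : GEState × Bool, x sa) = 1 ∧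
    ∀ s : GEState, (∑ a : Bool, x (s, a)) =
      ∑ s' : GEState, ∑ a : Bool, GEP ε s s' a * x (s', a)}

/-- Rate of queue 1: frequency of staying at queue 1 with channel 1 ON. -/
noncomputable def GErate1 (x : GEState × Bool → ℝ) : ℝ :=
  x ((true, true, true), true) + x ((true, true, false), true)

/-- Rate of queue 2: frequency of staying at queue 2 with channel 2 ON. -/
noncomputable def GErate2 (x : GEState × Bool → ℝ) : ℝ :=
  x ((false, true, true), true) + x ((false, false, true), true)

section Occupation

variable (σ : GEState → Bool) (π : GEState → ℝ)

noncomputable def occupation : GEState × Bool → ℝ :=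
  fun sa => if sa.2 = σ sa.1 then π sa.1 else 0

lemma sum_occupation_action (s : GEState) : ∑ a : Bool, occupation σ π (s, a) = π s := by
  simp [occupation]

lemma sum_GEP_mul_occupation (ε : ℝ) (s : GEState) :
    ∑ s' : GEState, ∑ a : Bool, GEP ε s s' a * occupation σ π (s', a) =
      ∑ s' : GEState, GEP ε s s' (σ s') * π s' := by
  simp [occupation, mul_ite]

variable {σ π}

lemma occupation_mem_GEX {ε : ℝ} (hπ_nonneg : ∀ s, 0 ≤ π s) (hπ_sum : ∑ s, π s = 1)
    (hπ_stationary : ∀ s, π s = ∑ s', GEP ε s s' (σ s') * π s') :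
    occupation σ π ∈ GEX ε := by
  refine ⟨fun sa => ?_, ?_, fun s => ?_⟩
  · unfold occupation
    split_ifs
    exacts [hπ_nonneg _, le_rfl]
  · rw [Fintype.sum_prod_type]
    simpa only [sum_occupation_action] using hπ_sum
  · rw [sum_occupation_action, sum_GEP_mul_occupation]
    exact hπ_stationary s

end Occupation

lemma chFlip_nonneg {ε : ℝ} (h0 : 0 ≤ ε) (h1 : ε ≤ 1) (c c' : Bool) : 0 ≤ chFlip ε c c' := by
  unfold chFlip
  split_ifs <;> linarith

lemma chFlip_le_one {ε : ℝ} (h0 : 0 ≤ ε) (h1 : ε ≤ 1) (c c' : Bool) : chFlip ε c c' ≤ 1 := by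
  unfold chFlip
  split_ifs <;> linarith

/-- Stay at queue 1 only in state `(1, ON, OFF)`; switch away from queue 2 only in `(2, ON, OFF)`. -/
def cornerPolicy : GEState → Bool
  | (m, c₁, c₂) => m == (c₁ && !c₂)

noncomputable def cornerStationary (ε : ℝ) : GEState → ℝ
  | (m, c₁, c₂) =>
    if m then chFlip ε true c₁ * chFlip ε false c₂ / 4
    else (1 - chFlip ε true c₁ * chFlip ε false c₂) / 4

lemma cornerStationary_nonneg {ε : ℝ} (h0 : 0 ≤ ε) (h1 : ε ≤ 1) (s : GEState) :
    0 ≤ cornerStationary ε s := by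
  obtain ⟨m, c₁, c₂⟩ := s
  have hprod_nonneg := mul_nonneg (chFlip_nonneg h0 h1 true c₁) (chFlip_nonneg h0 h1 false c₂)
  have hprod_le_one := mul_le_one₀ (chFlip_le_one h0 h1 true c₁) (chFlip_nonneg h0 h1 false c₂)
    (chFlip_le_one h0 h1 false c₂)
  cases m <;> simp only [cornerStationary, Bool.false_eq_true, if_true, if_false] <;> linarith

lemma sum_cornerStationary (ε : ℝ) : ∑ s, cornerStationary ε s = 1 := by
  simp +decide only [Fintype.sum_prod_type, Fintype.sum_bool, cornerStationary, chFlip, ↓reduceIte]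
  ring

lemma cornerStationary_balance (ε : ℝ) (s : GEState) :
    cornerStationary ε s =
      ∑ s', GEP ε s s' (cornerPolicy s') * cornerStationary ε s' := by
  obtain ⟨m, c₁, c₂⟩ := s
  cases m <;> cases c₁ <;> cases c₂ <;>
    simp +decide only [Fintype.sum_prod_type, Fintype.sum_bool, GEP, chFlip, cornerPolicy,
      cornerStationary, ↓reduceIte] <;> ring

/-- For every `ε ∈ (0, 1/2]`, some `x` in the state-action polytope `X(ε)` has rate pair
`((1-ε)²/4, (2-ε)/4)`. -/
theorem exists_rate_pair_corner' (ε : ℝ) (hε : ε ∈ Set.Ioc (0 : ℝ) (1 / 2)) :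
    ∃ x ∈ GEX ε,
      GErate1 x = (1 - ε) ^ 2 / 4 ∧
      GErate2 x = (2 - ε) / 4 := by
  have h0 : 0 ≤ ε := hε.1.le
  have h1 : ε ≤ 1 := hε.2.trans (by norm_num)
  refine ⟨occupation cornerPolicy (cornerStationary ε),
    occupation_mem_GEX (cornerStationary_nonneg h0 h1) (sum_cornerStationary ε)
      (cornerStationary_balance ε), ?_, ?_⟩
  · simp +decide only [GErate1, occupation, cornerStationary, chFlip, ↓reduceIte]
    ring
  · simp +decide only [GErate2, occupation, cornerStationary, chFlip, ↓reduceIte]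
    ring
end

section
/- Fix N ≥ 2 and p₀₁, p₁₀ ∈ (0,1) with p₀₁ + p₁₀ ≤ 1, and let C₀ = (p₁₀/(p₁₀+p₀₁))^N. Then there exists x in the state-action polytope X of the Gilbert–Elliot N-queue model with Σ_{i=1}^N r_i(x) = 1 − C₀ − ( p₁₀(1 − C₀) − p₀₁·C₀ ); in particular, the maximum of Σ_{i=1}^N r_i(x) over X equals 1 − C₀ − ( p₁₀(1 − C₀) − p₀₁·C₀ ), and it is attained by the greedy myopic stationary deterministic policy that stays at the current queue whenever its channel is ON and otherwise switches (in cyclic order) to a queue with ON channel if one exists. -/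
open Finset

/-- State of the Gilbert–Elliot `N`-queue model: the server location `m ∈ Fin N` and the
channel state vector `c : Fin N → Bool` (`true` = ON). -/
abbrev NState (N : ℕ) : Type := Fin N × (Fin N → Bool)

/-- One-step Gilbert–Elliot channel transition: from ON the channel moves to OFF with
probability `p₁₀`, from OFF it moves to ON with probability `p₀₁`. -/
noncomputable def chTrans (p01 p10 : ℝ) (c c' : Bool) : ℝ :=
  if c then (if c' then 1 - p10 else p10) else (if c' then p01 else 1 - p01)

/-- Transition probability of going to state `s'` from state `s` under action `a`:
the next location is `a`, and the channels move independently. -/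
noncomputable def NP (N : ℕ) (p01 p10 : ℝ) (s' s : NState N) (a : Fin N) : ℝ :=
  (if s'.1 = a then (1 : ℝ) else 0) * ∏ i : Fin N, chTrans p01 p10 (s.2 i) (s'.2 i)

/-- The state-action polytope `X`: nonnegative, normalized vectors satisfying the
balance equations. -/
def NX (N : ℕ) (p01 p10 : ℝ) : Set (NState N × Fin N → ℝ) :=
  {x | (∀ sa, 0 ≤ x sa) ∧ (∑ sa : NState N × Fin N, x sa) = 1 ∧
    ∀ s : NState N, (∑ a : Fin N, x (s, a)) =
      ∑ s' : NState N, ∑ a : Fin N, NP N p01 p10 s s' a * x (s', a)}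

/-- Rate of queue `i` under `x`: the frequency of staying at queue `i` while its
channel is ON. -/
noncomputable def Nrate (N : ℕ) (x : NState N × Fin N → ℝ) (i : Fin N) : ℝ :=
  ∑ c : Fin N → Bool, if c i then x ((i, c), i) else 0

/-- Cyclic distance from `m` to `j` in `{0, …, N-1}`: the number of forward steps from
`m` to reach `j` in cyclic order. -/
def cycDist (N : ℕ) (m j : Fin N) : ℕ := (j.val + N - m.val) % N

/-- The greedy myopic policy: at state `(m, c)`, stay at `m` if its channel is ON;
otherwise switch to the first queue with ON channel in cyclic order starting from `m`
(if one exists; otherwise stay). -/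
noncomputable def greedy (N : ℕ) (s : NState N) : Fin N :=
  if s.2 s.1 then s.1
  else if h : (Finset.univ.filter (fun j : Fin N => s.2 j = true)).Nonempty then
    ((Finset.univ.filter (fun j : Fin N => s.2 j = true)).exists_min_image
      (cycDist N s.1) h).choose
  else s.1

/-!
The channel vector is a Doeblin chain on its own, so the channel marginal of every `x` in the
polytope is the product stationary law, under which all channels are OFF with probability `C₀`.
By the balance equations, the mass of states whose served channel is ON equals the mean
probability that the channel chosen by the action is ON one slot later. That probability is
`p₀₁` when all channels are OFF and at most `1 - p₁₀` otherwise (as `p₀₁ ≤ 1 - p₁₀`), so the sum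
rate is at most `(1 - p₁₀)(1 - C₀) + p₀₁ C₀`. The greedy policy turns both inequalities into
equalities, and a stationary distribution of the chain it induces gives a point of the polytope.
-/

namespace Matrix

variable {n : Type*} [Fintype n] [DecidableEq n] {M : Matrix n n ℝ}

theorem sum_vecMul_of_mem_rowStochastic (hM : M ∈ rowStochastic ℝ n) (x : n → ℝ) :
    ∑ j, (x ᵥ* M) j = ∑ i, x i := by
  have h := dotProduct_mulVec x M 1
  rw [one_vecMul_of_mem_rowStochastic hM] at h
  simpa [dotProduct] using h.symm

-- `|v|` is subinvariant for an invariant `v`, and conservation of mass forces equality.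
theorem exists_stationary_of_mem_rowStochastic [Nonempty n] (hM : M ∈ rowStochastic ℝ n) :
    ∃ μ : n → ℝ, (∀ i, 0 ≤ μ i) ∧ ∑ i, μ i = 1 ∧ μ ᵥ* M = μ := by
  have hdet : (M - 1).det = 0 := by
    refine exists_mulVec_eq_zero_iff.mp ⟨1, one_ne_zero, ?_⟩
    rw [sub_mulVec, one_vecMul_of_mem_rowStochastic hM, one_mulVec, sub_self]
  obtain ⟨v, hv0, hv⟩ := exists_vecMul_eq_zero_iff.mpr hdet
  rw [vecMul_sub, vecMul_one, sub_eq_zero] at hv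
  set u : n → ℝ := fun i => |v i|
  have hsub : ∀ j, u j ≤ (u ᵥ* M) j := fun j =>
    calc |v j| = |∑ i, v i * M i j| := congrArg abs (congrFun hv j).symm
      _ ≤ ∑ i, |v i * M i j| := abs_sum_le_sum_abs _ _
      _ = (u ᵥ* M) j := by
        simp only [abs_mul, abs_of_nonneg (nonneg_of_mem_rowStochastic hM), vecMul, dotProduct,
          u]
  have hinv : u ᵥ* M = u := funext fun j =>
    ((sum_eq_sum_iff_of_le fun j _ => hsub j).mp
      (sum_vecMul_of_mem_rowStochastic hM u).symm j (mem_univ j)).symm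
  have hpos : 0 < ∑ i, u i := by
    obtain ⟨i, hi⟩ := Function.ne_iff.mp hv0
    exact sum_pos' (fun i _ => abs_nonneg (v i)) ⟨i, mem_univ i, abs_pos.mpr hi⟩
  refine ⟨(∑ i, u i)⁻¹ • u, fun i => ?_, ?_, by rw [smul_vecMul, hinv]⟩
  · exact mul_nonneg (inv_nonneg.mpr hpos.le) (abs_nonneg (v i))
  · simp only [Pi.smul_apply, smul_eq_mul, ← mul_sum, inv_mul_cancel₀ hpos.ne']

-- Doeblin's argument: `d ↦ d ᵥ* M` contracts the `ℓ¹` norm of mass-zero vectors by `1 - |n| ε`.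
theorem eq_zero_of_vecMul_eq_self_of_sum_eq_zero (hM : M ∈ rowStochastic ℝ n) {ε : ℝ}
    (hε : 0 < ε) (hMε : ∀ i j, ε ≤ M i j) {d : n → ℝ} (hd : ∑ i, d i = 0)
    (hinv : d ᵥ* M = d) : d = 0 := by
  rcases isEmpty_or_nonempty n with hn | hn
  · exact Subsingleton.elim _ _
  have hshift : ∀ j, d j = ∑ i, d i * (M i j - ε) := fun j => by
    simp only [mul_sub, sum_sub_distrib, ← sum_mul, hd, zero_mul, sub_zero]
    exact (congrFun hinv j).symm
  have hcontr : ∑ j, |d j| ≤ (1 - Fintype.card n * ε) * ∑ i, |d i| :=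
    calc ∑ j, |d j| ≤ ∑ j, ∑ i, |d i| * (M i j - ε) := sum_le_sum fun j _ => by
          rw [hshift j]
          refine (abs_sum_le_sum_abs _ _).trans (le_of_eq (sum_congr rfl fun i _ => ?_))
          rw [abs_mul, abs_of_nonneg (sub_nonneg.mpr (hMε i j))]
      _ = (1 - Fintype.card n * ε) * ∑ i, |d i| := by
          rw [sum_comm, mul_sum]
          refine sum_congr rfl fun i _ => ?_
          rw [← mul_sum, sum_sub_distrib, sum_row_of_mem_rowStochastic hM, sum_const,
            card_univ, nsmul_eq_mul]
          ring
  have hcard : 0 < Fintype.card n * ε := mul_pos (by exact_mod_cast Fintype.card_pos) hε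
  have hzero : ∑ i, |d i| = 0 := by
    nlinarith [sum_nonneg fun i (_ : i ∈ univ) => abs_nonneg (d i)]
  funext i
  exact abs_eq_zero.mp ((sum_eq_zero_iff_of_nonneg fun i _ => abs_nonneg (d i)).mp hzero i
    (mem_univ i))

end Matrix

theorem Fintype.sum_ite_apply_eq_prod_of_sum_eq_one {ι β R : Type*} [Fintype ι] [DecidableEq ι]
    [Fintype β] [DecidableEq β] [CommSemiring R] (f : ι → β → R) (hf : ∀ i, ∑ b, f i b = 1)
    (a : ι) (b : β) :
    ∑ c : ι → β, (if c a = b then ∏ i, f i (c i) else 0) = f a b := by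
  let g : ι → β → R := fun i x => if i = a ∧ x ≠ b then 0 else f i x
  have hg : ∀ c : ι → β, (if c a = b then ∏ i, f i (c i) else 0) = ∏ i, g i (c i) := by
    intro c
    split_ifs with hc
    · exact Finset.prod_congr rfl fun i _ =>
        (if_neg fun h : i = a ∧ c i ≠ b => h.2 (h.1 ▸ hc)).symm
    · exact (prod_eq_zero (mem_univ a) (by simp [g, hc])).symm
  have hgsum : ∀ i, ∑ x, g i x = if i = a then f a b else 1 := by
    intro i
    split_ifs with hi
    · subst hi; simp [g]
    · simp [g, hi, hf]
  simp only [hg, ← Fintype.prod_sum, hgsum, prod_ite_eq']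

section GilbertElliot

open Matrix

variable {N : ℕ} {p01 p10 : ℝ}

theorem chTrans_nonneg (h01 : p01 ∈ Set.Icc (0 : ℝ) 1) (h10 : p10 ∈ Set.Icc (0 : ℝ) 1)
    (b b' : Bool) : 0 ≤ chTrans p01 p10 b b' := by
  obtain ⟨_, _⟩ := h01
  obtain ⟨_, _⟩ := h10
  cases b <;> cases b' <;> simp only [chTrans, Bool.false_eq_true, ↓reduceIte] <;> linarith

theorem sum_chTrans (b : Bool) : ∑ b', chTrans p01 p10 b b' = 1 := by
  cases b <;> simp [chTrans]

theorem min_le_chTrans (hsum : p01 + p10 ≤ 1) (b b' : Bool) :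
    min p01 p10 ≤ chTrans p01 p10 b b' := by
  have := min_le_left p01 p10
  have := min_le_right p01 p10
  cases b <;> cases b' <;> simp only [chTrans, Bool.false_eq_true, ↓reduceIte] <;> linarith

noncomputable def chTransStationary (p01 p10 : ℝ) (b : Bool) : ℝ :=
  if b then p01 / (p01 + p10) else p10 / (p01 + p10)

theorem sum_chTransStationary (hp : p01 + p10 ≠ 0) :
    ∑ b, chTransStationary p01 p10 b = 1 := by
  simp only [Fintype.sum_bool, chTransStationary, Bool.false_eq_true, ↓reduceIte]
  field_simp

theorem sum_chTransStationary_mul_chTrans (hp : p01 + p10 ≠ 0) (b' : Bool) :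
    ∑ b, chTransStationary p01 p10 b * chTrans p01 p10 b b' = chTransStationary p01 p10 b' := by
  cases b' <;>
    simp only [Fintype.sum_bool, chTransStationary, chTrans, Bool.false_eq_true, ↓reduceIte] <;>
    field_simp <;> ring

noncomputable def chKernel (N : ℕ) (p01 p10 : ℝ) : Matrix (Fin N → Bool) (Fin N → Bool) ℝ :=
  of fun c c' => ∏ i, chTrans p01 p10 (c i) (c' i)

@[simp]
theorem chKernel_apply (c c' : Fin N → Bool) :
    chKernel N p01 p10 c c' = ∏ i, chTrans p01 p10 (c i) (c' i) := rfl

theorem sum_chKernel (c : Fin N → Bool) : ∑ c', chKernel N p01 p10 c c' = 1 := by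
  simp only [chKernel_apply, ← Fintype.prod_sum, sum_chTrans, prod_const_one]

theorem chKernel_mem_rowStochastic (h01 : p01 ∈ Set.Icc (0 : ℝ) 1)
    (h10 : p10 ∈ Set.Icc (0 : ℝ) 1) : chKernel N p01 p10 ∈ rowStochastic ℝ _ := by
  refine mem_rowStochastic_iff_sum.mpr ⟨fun c c' => ?_, sum_chKernel⟩
  exact (chKernel_apply c c').symm ▸ prod_nonneg fun i _ => chTrans_nonneg h01 h10 _ _

theorem pow_min_le_chKernel (hp01 : 0 < p01) (hp10 : 0 < p10) (hsum : p01 + p10 ≤ 1)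
    (c c' : Fin N → Bool) : min p01 p10 ^ N ≤ chKernel N p01 p10 c c' := by
  calc min p01 p10 ^ N = ∏ _i : Fin N, min p01 p10 := by simp
    _ ≤ _ := prod_le_prod (fun _ _ => (lt_min hp01 hp10).le) fun i _ => min_le_chTrans hsum _ _

noncomputable def chStationary (N : ℕ) (p01 p10 : ℝ) (c : Fin N → Bool) : ℝ :=
  ∏ i, chTransStationary p01 p10 (c i)

theorem chStationary_allOff :
    chStationary N p01 p10 (fun _ => false) = (p10 / (p01 + p10)) ^ N := by
  simp [chStationary, chTransStationary, div_pow]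

theorem sum_chStationary (hp : p01 + p10 ≠ 0) : ∑ c, chStationary N p01 p10 c = 1 :=
  calc ∑ c, chStationary N p01 p10 c = ∏ _i : Fin N, ∑ b, chTransStationary p01 p10 b :=
        (Fintype.prod_sum fun _ => chTransStationary p01 p10).symm
    _ = 1 := by simp only [sum_chTransStationary hp, prod_const_one]

theorem chStationary_vecMul_chKernel (hp : p01 + p10 ≠ 0) :
    chStationary N p01 p10 ᵥ* chKernel N p01 p10 = chStationary N p01 p10 := by
  funext c'
  calc ∑ c, chStationary N p01 p10 c * chKernel N p01 p10 c c'
      = ∏ i, ∑ b, chTransStationary p01 p10 b * chTrans p01 p10 b (c' i) := by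
        simp only [chStationary, chKernel_apply, ← prod_mul_distrib]
        exact (Fintype.prod_sum fun i b =>
          chTransStationary p01 p10 b * chTrans p01 p10 b (c' i)).symm
    _ = chStationary N p01 p10 c' := by
        simp only [sum_chTransStationary_mul_chTrans hp, chStationary]

theorem eq_chStationary (hp01 : 0 < p01) (hp10 : 0 < p10) (hsum : p01 + p10 ≤ 1)
    {y : (Fin N → Bool) → ℝ} (hy : ∑ c, y c = 1) (hinv : y ᵥ* chKernel N p01 p10 = y) :
    y = chStationary N p01 p10 := by
  have hp : p01 + p10 ≠ 0 := by positivity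
  have h01 : p01 ∈ Set.Icc (0 : ℝ) 1 := ⟨hp01.le, by linarith⟩
  have h10 : p10 ∈ Set.Icc (0 : ℝ) 1 := ⟨hp10.le, by linarith⟩
  rw [← sub_eq_zero]
  refine eq_zero_of_vecMul_eq_self_of_sum_eq_zero (chKernel_mem_rowStochastic h01 h10)
    (pow_pos (lt_min hp01 hp10) N) (pow_min_le_chKernel hp01 hp10 hsum) ?_ ?_
  · simp [sum_sub_distrib, hy, sum_chStationary hp]
  · rw [sub_vecMul, hinv, chStationary_vecMul_chKernel hp]

theorem NP_eq_ite_mul_chKernel (s' s : NState N) (a : Fin N) :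
    NP N p01 p10 s' s a = (if s'.1 = a then 1 else 0) * chKernel N p01 p10 s.2 s'.2 := rfl

theorem NP_nonneg (h01 : p01 ∈ Set.Icc (0 : ℝ) 1) (h10 : p10 ∈ Set.Icc (0 : ℝ) 1)
    (s' s : NState N) (a : Fin N) : 0 ≤ NP N p01 p10 s' s a :=
  mul_nonneg (by split_ifs <;> norm_num)
    (nonneg_of_mem_rowStochastic (chKernel_mem_rowStochastic h01 h10))

theorem sum_fst_NP (c' : Fin N → Bool) (s : NState N) (a : Fin N) :
    ∑ m, NP N p01 p10 (m, c') s a = chKernel N p01 p10 s.2 c' := by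
  simp [NP_eq_ite_mul_chKernel]

theorem sum_NP (s : NState N) (a : Fin N) : ∑ s', NP N p01 p10 s' s a = 1 := by
  rw [Fintype.sum_prod_type_right]
  simp only [sum_fst_NP, sum_chKernel]

theorem sum_on_NP (s : NState N) (a : Fin N) :
    ∑ s' : NState N, (if s'.2 s'.1 then NP N p01 p10 s' s a else 0) =
      chTrans p01 p10 (s.2 a) true := by
  rw [Fintype.sum_prod_type, ← Fintype.sum_ite_apply_eq_prod_of_sum_eq_one
    (fun i => chTrans p01 p10 (s.2 i)) (fun i => sum_chTrans _), sum_comm]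
  refine sum_congr rfl fun c _ => ?_
  rw [sum_eq_single a (fun m _ hm => by simp [NP_eq_ite_mul_chKernel, hm]) (by simp)]
  simp [NP_eq_ite_mul_chKernel]

def chMarginal (x : NState N × Fin N → ℝ) (c : Fin N → Bool) : ℝ :=
  ∑ m, ∑ a, x ((m, c), a)

theorem sum_chMarginal_mul (x : NState N × Fin N → ℝ) (f : (Fin N → Bool) → ℝ) :
    ∑ c, chMarginal x c * f c = ∑ s : NState N, ∑ a, x (s, a) * f s.2 := by
  simp only [Fintype.sum_prod_type_right (f := fun s : NState N => ∑ a, x (s, a) * f s.2),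
    chMarginal, sum_mul]

theorem sum_chMarginal {x : NState N × Fin N → ℝ} (hx : x ∈ NX N p01 p10) :
    ∑ c, chMarginal x c = 1 := by
  simpa [← Fintype.sum_prod_type', hx.2.1] using sum_chMarginal_mul x fun _ => 1

theorem chMarginal_vecMul_chKernel {x : NState N × Fin N → ℝ} (hx : x ∈ NX N p01 p10) :
    chMarginal x ᵥ* chKernel N p01 p10 = chMarginal x := by
  funext c'
  calc ∑ c, chMarginal x c * chKernel N p01 p10 c c'
      = ∑ s : NState N, ∑ a, x (s, a) * chKernel N p01 p10 s.2 c' := sum_chMarginal_mul x _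
    _ = ∑ s : NState N, ∑ m, ∑ a, NP N p01 p10 (m, c') s a * x (s, a) := by
        refine sum_congr rfl fun s _ => ?_
        rw [sum_comm]
        exact sum_congr rfl fun a _ => by rw [← sum_fst_NP _ _ a, mul_sum]; simp only [mul_comm]
    _ = chMarginal x c' := by simp only [chMarginal, hx.2.2]; exact sum_comm

theorem chMarginal_eq_chStationary (hp01 : 0 < p01) (hp10 : 0 < p10) (hsum : p01 + p10 ≤ 1)
    {x : NState N × Fin N → ℝ} (hx : x ∈ NX N p01 p10) :
    chMarginal x = chStationary N p01 p10 :=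
  eq_chStationary hp01 hp10 hsum (sum_chMarginal hx) (chMarginal_vecMul_chKernel hx)

theorem sum_Nrate (x : NState N × Fin N → ℝ) :
    ∑ i, Nrate N x i = ∑ s : NState N, if s.2 s.1 then x (s, s.1) else 0 :=
  (Fintype.sum_prod_type fun s : NState N => if s.2 s.1 then x (s, s.1) else 0).symm

theorem sum_on_eq_sum_chTrans_mul {x : NState N × Fin N → ℝ} (hx : x ∈ NX N p01 p10) :
    ∑ s : NState N, (if s.2 s.1 then ∑ a, x (s, a) else 0) =
      ∑ s : NState N, ∑ a, chTrans p01 p10 (s.2 a) true * x (s, a) := by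
  calc ∑ s : NState N, (if s.2 s.1 then ∑ a, x (s, a) else 0)
      = ∑ s : NState N, ∑ s' : NState N, ∑ a,
          if s.2 s.1 then NP N p01 p10 s s' a * x (s', a) else 0 :=
        sum_congr rfl fun s _ => by split_ifs <;> simp [hx.2.2]
    _ = ∑ s' : NState N, ∑ a, ∑ s : NState N,
          if s.2 s.1 then NP N p01 p10 s s' a * x (s', a) else 0 := by
        rw [Finset.sum_comm]
        exact sum_congr rfl fun _ _ => Finset.sum_comm
    _ = _ := by simp only [← sum_on_NP, sum_mul, ite_mul, zero_mul]

theorem greedy_of_on {s : NState N} (h : s.2 s.1 = true) : greedy N s = s.1 := by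
  simp [greedy, h]

theorem greedy_on {s : NState N} (h : ∃ j, s.2 j = true) : s.2 (greedy N s) = true := by
  unfold greedy
  split_ifs with hm hne
  · exact hm
  · simpa using (exists_min_image _ (cycDist N s.1) hne).choose_spec.1
  · obtain ⟨j, hj⟩ := h
    exact absurd ⟨j, by simpa using hj⟩ hne

/-- `max_a P(next channel a is ON | c)`; the greedy policy attains it. -/
noncomputable def maxOnProb (p01 p10 : ℝ) (c : Fin N → Bool) : ℝ :=
  if c = fun _ => false then p01 else 1 - p10

theorem chTrans_le_maxOnProb (hsum : p01 + p10 ≤ 1) (c : Fin N → Bool) (a : Fin N) :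
    chTrans p01 p10 (c a) true ≤ maxOnProb p01 p10 c := by
  unfold maxOnProb
  split_ifs with hc
  · simp [hc, chTrans]
  · cases c a <;> simp only [chTrans, Bool.false_eq_true, ↓reduceIte] <;> linarith

theorem chTrans_greedy (s : NState N) :
    chTrans p01 p10 (s.2 (greedy N s)) true = maxOnProb p01 p10 s.2 := by
  unfold maxOnProb
  split_ifs with hc
  · simp [hc, chTrans]
  · obtain ⟨j, hj⟩ := Function.ne_iff.mp hc
    simp [greedy_on ⟨j, by simpa using hj⟩, chTrans]

theorem sum_mul_maxOnProb (hp01 : 0 < p01) (hp10 : 0 < p10) (hsum : p01 + p10 ≤ 1)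
    {x : NState N × Fin N → ℝ} (hx : x ∈ NX N p01 p10) :
    ∑ s : NState N, ∑ a, x (s, a) * maxOnProb p01 p10 s.2 =
      (1 - p10) * (1 - (p10 / (p01 + p10)) ^ N) + p01 * (p10 / (p01 + p10)) ^ N := by
  have hp : p01 + p10 ≠ 0 := by positivity
  have hon : ∑ c ∈ univ.erase (fun _ => false),
      chStationary N p01 p10 c * maxOnProb p01 p10 c =
        (1 - p10) * (1 - chStationary N p01 p10 fun _ => false) := by
    rw [sum_congr rfl fun c hc => by rw [maxOnProb, if_neg (ne_of_mem_erase hc)], ← sum_mul,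
      sum_erase_eq_sub (mem_univ _), sum_chStationary hp, mul_comm]
  rw [← sum_chMarginal_mul, chMarginal_eq_chStationary hp01 hp10 hsum hx,
    ← add_sum_erase _ _ (mem_univ fun _ => false), hon, maxOnProb, if_pos rfl,
    chStationary_allOff]
  ring

theorem sum_Nrate_le (hsum : p01 + p10 ≤ 1) {x : NState N × Fin N → ℝ}
    (hx : x ∈ NX N p01 p10) :
    ∑ i, Nrate N x i ≤ ∑ s : NState N, ∑ a, x (s, a) * maxOnProb p01 p10 s.2 :=
  calc ∑ i, Nrate N x i ≤ ∑ s : NState N, (if s.2 s.1 then ∑ a, x (s, a) else 0) := by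
        rw [sum_Nrate]
        refine sum_le_sum fun s _ => ?_
        split_ifs
        · exact single_le_sum (fun a _ => hx.1 (s, a)) (mem_univ s.1)
        · rfl
    _ = ∑ s : NState N, ∑ a, chTrans p01 p10 (s.2 a) true * x (s, a) :=
        sum_on_eq_sum_chTrans_mul hx
    _ ≤ _ := sum_le_sum fun s _ => sum_le_sum fun a _ => by
        rw [mul_comm]
        exact mul_le_mul_of_nonneg_left (chTrans_le_maxOnProb hsum s.2 a) (hx.1 _)

theorem sum_Nrate_of_greedy {x : NState N × Fin N → ℝ} (hx : x ∈ NX N p01 p10)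
    (hg : ∀ s a, a ≠ greedy N s → x (s, a) = 0) :
    ∑ i, Nrate N x i = ∑ s : NState N, ∑ a, x (s, a) * maxOnProb p01 p10 s.2 := by
  have hsupp : ∀ s (f : Fin N → ℝ), ∑ a, x (s, a) * f a = x (s, greedy N s) * f (greedy N s) :=
    fun s f => sum_eq_single _ (fun a _ ha => by rw [hg s a ha, zero_mul]) (by simp)
  calc ∑ i, Nrate N x i = ∑ s : NState N, (if s.2 s.1 then ∑ a, x (s, a) else 0) := by
        rw [sum_Nrate]
        refine sum_congr rfl fun s _ => ?_
        split_ifs with h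
        · simpa [greedy_of_on h] using (hsupp s fun _ => 1).symm
        · rfl
    _ = ∑ s : NState N, ∑ a, chTrans p01 p10 (s.2 a) true * x (s, a) :=
        sum_on_eq_sum_chTrans_mul hx
    _ = _ := sum_congr rfl fun s _ => by
        simp only [mul_comm (chTrans _ _ _ _), hsupp s, chTrans_greedy]

theorem exists_mem_NX_supported_on (hN : 0 < N) (h01 : p01 ∈ Set.Icc (0 : ℝ) 1)
    (h10 : p10 ∈ Set.Icc (0 : ℝ) 1) (π : NState N → Fin N) :
    ∃ x ∈ NX N p01 p10, ∀ s a, a ≠ π s → x (s, a) = 0 := by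
  have : Nonempty (Fin N) := ⟨⟨0, hN⟩⟩
  have hQ : of (fun s s' => NP N p01 p10 s' s (π s)) ∈ rowStochastic ℝ (NState N) :=
    mem_rowStochastic_iff_sum.mpr ⟨fun s s' => NP_nonneg h01 h10 s' s _, fun s => sum_NP s _⟩
  obtain ⟨μ, hμ0, hμ1, hμ⟩ := exists_stationary_of_mem_rowStochastic hQ
  refine ⟨fun sa => if sa.2 = π sa.1 then μ sa.1 else 0, ⟨fun sa => ?_, ?_, fun s => ?_⟩,
    fun s a ha => if_neg ha⟩
  · dsimp only
    split_ifs
    exacts [hμ0 _, le_rfl]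
  · simpa [Fintype.sum_prod_type] using hμ1
  · simpa [vecMul, dotProduct, mul_comm] using (congrFun hμ s).symm

end GilbertElliot

/-- With `C₀ = (p₁₀/(p₁₀+p₀₁))^N`, there is an `x` in the state-action polytope,
supported on the greedy myopic policy's actions, whose sum rate equals
`1 - C₀ - (p₁₀(1-C₀) - p₀₁ C₀)`; in particular this value is the maximum of the sum
rate over the state-action polytope. -/
theorem greedy_achieves_sum_rate_bound (N : ℕ) (hN : 2 ≤ N) (p01 p10 : ℝ)
    (h01 : p01 ∈ Set.Ioo (0 : ℝ) 1) (h10 : p10 ∈ Set.Ioo (0 : ℝ) 1)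
    (hsum : p01 + p10 ≤ 1) :
    (∃ x ∈ NX N p01 p10,
      (∀ s : NState N, ∀ a : Fin N, a ≠ greedy N s → x (s, a) = 0) ∧
      ∑ i : Fin N, Nrate N x i =
        1 - (p10 / (p10 + p01)) ^ N -
          (p10 * (1 - (p10 / (p10 + p01)) ^ N) - p01 * (p10 / (p10 + p01)) ^ N)) ∧
    IsGreatest {r : ℝ | ∃ x ∈ NX N p01 p10, r = ∑ i : Fin N, Nrate N x i}
      (1 - (p10 / (p10 + p01)) ^ N -
        (p10 * (1 - (p10 / (p10 + p01)) ^ N) - p01 * (p10 / (p10 + p01)) ^ N)) := by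
  have hbound : (1 - p10) * (1 - (p10 / (p01 + p10)) ^ N) + p01 * (p10 / (p01 + p10)) ^ N =
      1 - (p10 / (p10 + p01)) ^ N -
        (p10 * (1 - (p10 / (p10 + p01)) ^ N) - p01 * (p10 / (p10 + p01)) ^ N) := by
    rw [add_comm p01 p10]
    ring
  obtain ⟨x, hx, hgreedy⟩ := exists_mem_NX_supported_on (by omega)
    (Set.Ioo_subset_Icc_self h01) (Set.Ioo_subset_Icc_self h10) (greedy N)
  have hrate := (sum_Nrate_of_greedy hx hgreedy).trans
    ((sum_mul_maxOnProb h01.1 h10.1 hsum hx).trans hbound)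
  refine ⟨⟨x, hx, hgreedy, hrate⟩, ⟨x, hx, hrate.symm⟩, ?_⟩
  rintro _ ⟨y, hy, rfl⟩
  exact (sum_Nrate_le hsum hy).trans ((sum_mul_maxOnProb h01.1 h10.1 hsum hy).trans hbound).le
end
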